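/- Let A : [0,1] → M_{n×n}(ℂ) be a continuous family of Hermitian positive-semidefinite matrices such that for every t ∈ [0,1] the matrix A_t has exactly m nonzero eigenvalues and these are pairwise distinct: μ₁(t) > μ₂(t) > ⋯ > μ_m(t) > 0. Then there exist continuous maps v₁, …, v_m : [0,1] → ℂⁿ such that for every t ∈ [0,1] the vectors v₁(t), …, v_m(t) form an orthonormal system and A_t v_k(t) = μ_k(t) v_k(t) for each k = 1, …, m. -/

import Mathlib

open MeasureTheory Complex ContinuousLinearMap
open scoped ComplexConjugate ENNReal NNReal

noncomputable section

/-! Basic setup: the unit circle `𝕋 = Circle ⊆ ℂ` with its Borel σ-algebra and its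
normalized arc-length (Haar) probability measure `μc`; the spaces `L²(𝕋, ℂⁿ)` and the
Hardy spaces `H²(ℂⁿ)`; shifts, matrix- (i.e. operator-) valued functions on the circle,
their Fourier coefficients, inner functions and analytic extensions into the unit disk. -/

instance : MeasurableSpace Circle := borel Circle
instance : BorelSpace Circle := ⟨rfl⟩
instance : Fact (0 < 2 * Real.pi) := ⟨by positivity⟩

/-- The normalized arc-length (Haar) probability measure on the unit circle `𝕋`. -/
def μc : Measure Circle :=
  Measure.map AddCircle.homeomorphCircle' AddCircle.haarAddCircle

/-- `ℂⁿ` as a (finite dimensional) Hilbert space. -/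
abbrev Cn (n : ℕ) := EuclideanSpace ℂ (Fin n)

/-- `L²(𝕋, ℂⁿ)`. -/
abbrev L2 (n : ℕ) := Lp (Cn n) 2 μc

/-- The `k`-th Fourier coefficient `f̂(k) = ∫_𝕋 f(z) z̄ᵏ dμ` of a `ℂⁿ`-valued function. -/
def fc {n : ℕ} (f : Circle → Cn n) (k : ℤ) : Cn n :=
  ∫ z, ((starRingEnd ℂ) (z : ℂ)) ^ k • f z ∂μc

/-- The Hardy space `H²(ℂⁿ)`, as a subset of `L²(𝕋, ℂⁿ)`: those `f` whose Fourier
coefficients `f̂(k)` vanish for all `k < 0`. -/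
def H2 (n : ℕ) : Set (L2 n) :=
  {f | ∀ k : ℤ, k < 0 → fc (f : Circle → Cn n) k = 0}

/-- A set `M ⊆ L²(𝕋, ℂⁿ)` is invariant under the shift `U` (multiplication by the
coordinate function `z`): for every `f ∈ M`, the element `U f` (i.e. the element of `L²`
represented by `z ↦ z • f(z)`) again belongs to `M`. -/
def ShiftInv {n : ℕ} (M : Set (L2 n)) : Prop :=
  ∀ f ∈ M, ∃ g ∈ M, (g : Circle → Cn n) =ᵐ[μc] fun z => (z : ℂ) • (f : Circle → Cn n) z

/-- Invariance of `M ⊆ L²(𝕋, ℂⁿ)` under the adjoint `U*` of the bilateral shift,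
i.e. multiplication by `z̄`. -/
def ShiftStarInv {n : ℕ} (M : Set (L2 n)) : Prop :=
  ∀ f ∈ M, ∃ g ∈ M,
    (g : Circle → Cn n) =ᵐ[μc] fun z => ((starRingEnd ℂ) (z : ℂ)) • (f : Circle → Cn n) z

/-- The image `U M` of a set `M ⊆ L²(𝕋, ℂⁿ)` under the shift (multiplication by `z`). -/
def Sset {n : ℕ} (M : Set (L2 n)) : Set (L2 n) :=
  {g | ∃ f ∈ M, (g : Circle → Cn n) =ᵐ[μc] fun z => (z : ℂ) • (f : Circle → Cn n) z}

/-- The image `Uᵏ M` of a set `M ⊆ L²(𝕋, ℂⁿ)` under the `k`-th power of the shift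
(multiplication by `zᵏ`). -/
def shiftPow {n : ℕ} (k : ℕ) (M : Set (L2 n)) : Set (L2 n) :=
  {g | ∃ f ∈ M, (g : Circle → Cn n) =ᵐ[μc] fun z => ((z : ℂ) ^ k) • (f : Circle → Cn n) z}

/-- Multiplication of a set `A ⊆ L²(𝕋, ℂᵐ)` by a matrix- (operator-) valued function `G`
on the circle: `G·A = {G·f : f ∈ A}` inside `L²(𝕋, ℂⁿ)`. -/
def mulSet {m n : ℕ} (G : Circle → (Cn m →L[ℂ] Cn n)) (A : Set (L2 m)) : Set (L2 n) :=
  {h | ∃ f ∈ A, (h : Circle → Cn n) =ᵐ[μc] fun z => G z ((f : Circle → Cn m) z)}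

/-- The `k`-th matrix Fourier coefficient `Ĝ(k) = ∫_𝕋 G(z) z̄ᵏ dμ` of a matrix-valued
function on the circle. -/
def fcM {m n : ℕ} (G : Circle → (Cn m →L[ℂ] Cn n)) (k : ℤ) : Cn m →L[ℂ] Cn n :=
  ∫ z, ((starRingEnd ℂ) (z : ℂ)) ^ k • G z ∂μc

/-- An inner function from `ℂᵐ` to `ℂⁿ`: a measurable, essentially bounded, matrix-valued
function `G` on `𝕋` with `G(z)*G(z) = Iₘ` for a.e. `z` and all negative matrix Fourier
coefficients vanishing. -/
def IsInner {m n : ℕ} (G : Circle → (Cn m →L[ℂ] Cn n)) : Prop :=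
  Measurable G ∧ (∃ C : ℝ, ∀ᵐ z ∂μc, ‖G z‖ ≤ C) ∧
    (∀ᵐ z ∂μc, (ContinuousLinearMap.adjoint (G z)).comp (G z) = ContinuousLinearMap.id ℂ (Cn m)) ∧
    (∀ k : ℤ, k < 0 → fcM G k = 0)

/-- The analytic extension `G(λ) = Σ_{k ≥ 0} Ĝ(k) λᵏ` of a matrix-valued function on the
circle to a point `λ` of the open unit disk. -/
def ext {m n : ℕ} (G : Circle → (Cn m →L[ℂ] Cn n)) (lam : ℂ) : Cn m →L[ℂ] Cn n :=
  ∑' k : ℕ, lam ^ k • fcM G (k : ℤ)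

/-- The analytic extension `h(λ) = Σ_{k ≥ 0} ĥ(k) λᵏ` of a vector-valued function on the
circle to a point `λ` of the open unit disk. -/
def extV {n : ℕ} (h : Circle → Cn n) (lam : ℂ) : Cn n :=
  ∑' k : ℕ, lam ^ k • fc h (k : ℤ)

/-- The orthogonal projection of `ℂⁿ` onto a subspace `N`, as an endomorphism of `ℂⁿ`. -/
def projOn {n : ℕ} (N : Submodule ℂ (Cn n)) : Cn n →L[ℂ] Cn n :=
  N.subtypeL.comp N.orthogonalProjectionOnto

/-- A bounded operator `p` on a Hilbert space is an orthogonal projection iff it is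
idempotent and self-adjoint. -/
def IsOrthoProj {E : Type*} [NormedAddCommGroup E] [InnerProductSpace ℂ E] [CompleteSpace E]
    (p : E →L[ℂ] E) : Prop :=
  p.comp p = p ∧ ContinuousLinearMap.adjoint p = p

/-- `H²(N)` for a subspace `N ⊆ ℂⁿ`: those `f ∈ H²(ℂⁿ)` with `f(z) ∈ N` for a.e. `z`. -/
def H2N {n : ℕ} (N : Submodule ℂ (Cn n)) : Set (L2 n) :=
  {f | f ∈ H2 n ∧ ∀ᵐ z ∂μc, (f : Circle → Cn n) z ∈ N}


/-!
An eigenvalue of `T` lies within `‖S - T‖` of an eigenvalue of a Hermitian `S`. When `‖S - T‖`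
is small compared with `μ_m` and with the gaps between the `μ_k`, this matching of the nonzero
eigenvalues of `T` and `S` must preserve their order, so each `μ_k` is continuous in `t`. The
projection onto the `μ_k(t)`-eigenspace is then a Lagrange interpolation polynomial in `A_t`
with coefficients continuous in `t`, hence a continuous family `Q_k(t)` of idempotents. Such a
family over `[0, 1]` has a continuous nowhere-vanishing section: if `Q(a) v = v ≠ 0` and
`‖Q(t) - Q(a)‖ < 1` then `Q(t) v ≠ 0`, and uniform continuity lets us extend step by step.
Normalizing gives the `v_k`, which are orthogonal as eigenvectors of a Hermitian operator for
distinct eigenvalues.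
-/

open Filter Topology Set Module

section Perturbation

variable {𝕜 E : Type*} [RCLike 𝕜] [NormedAddCommGroup E] [InnerProductSpace 𝕜 E]
  [FiniteDimensional 𝕜 E]

theorem LinearMap.IsSymmetric.mul_norm_le_norm_apply_sub_smul {T : E →ₗ[𝕜] E}
    (hT : T.IsSymmetric) {c : 𝕜} {d : ℝ} (hd₀ : 0 ≤ d)
    (hd : ∀ i, d ≤ ‖c - hT.eigenvalues rfl i‖) (x : E) : d * ‖x‖ ≤ ‖T x - c • x‖ := by
  set b := hT.eigenvectorBasis rfl
  have hrepr : ∀ i, b.repr (T x - c • x) i = (hT.eigenvalues rfl i - c) * b.repr x i := by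
    intro i
    simp only [map_sub, map_smul, PiLp.sub_apply, PiLp.smul_apply, smul_eq_mul, b,
      hT.eigenvectorBasis_apply_self_apply]
    ring
  have hsq : (d * ‖x‖) ^ 2 ≤ ‖T x - c • x‖ ^ 2 := by
    rw [mul_pow, ← b.repr.norm_map x, ← b.repr.norm_map (T x - c • x),
      EuclideanSpace.norm_sq_eq, EuclideanSpace.norm_sq_eq, Finset.mul_sum]
    refine Finset.sum_le_sum fun i _ => ?_
    rw [hrepr, norm_mul, mul_pow, norm_sub_rev]
    gcongr
    exact hd i
  exact (abs_le_of_sq_le_sq' hsq (norm_nonneg _)).2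

theorem exists_eigenvalue_norm_sub_le {T S : E →L[𝕜] E} (hS : (S : E →ₗ[𝕜] E).IsSymmetric)
    {c : 𝕜} {x : E} (hx₀ : x ≠ 0) (hx : T x = c • x) :
    ∃ i, ‖c - hS.eigenvalues rfl i‖ ≤ ‖S - T‖ := by
  have : Nontrivial E := ⟨x, 0, hx₀⟩
  have : Nonempty (Fin (finrank 𝕜 E)) := ⟨⟨0, finrank_pos⟩⟩
  obtain ⟨i, hi⟩ := Finite.exists_min fun i => ‖c - hS.eigenvalues rfl i‖
  refine ⟨i, le_of_mul_le_mul_right ?_ (norm_pos_iff.2 hx₀)⟩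
  calc ‖c - hS.eigenvalues rfl i‖ * ‖x‖ ≤ ‖S x - c • x‖ :=
        hS.mul_norm_le_norm_apply_sub_smul (norm_nonneg _) hi x
    _ = ‖(S - T) x‖ := by rw [sub_apply, hx]
    _ ≤ ‖S - T‖ * ‖x‖ := (S - T).le_opNorm x

end Perturbation

theorem abs_sub_le_of_forall_exists_abs_sub_le {ι : Type*} [LinearOrder ι] [Finite ι]
    {f g : ι → ℝ} {ε : ℝ} (hg : StrictAnti g) (hf : ∀ k l, k < l → f l + 2 * ε < f k)
    (h : ∀ k, ∃ l, |f k - g l| ≤ ε) (k : ι) : |f k - g k| ≤ ε := by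
  choose τ hτ using h
  have hτ_mono : StrictMono τ := fun k l hkl => by
    have := abs_le.1 (hτ k)
    have := abs_le.1 (hτ l)
    exact hg.lt_iff_gt.1 (by linarith [hf k l hkl])
  have hτk : τ k = k := le_antisymm hτ_mono.apply_le hτ_mono.le_apply
  simpa only [hτk] using hτ k

section EigenvalueContinuity

variable {𝕜 E : Type*} [RCLike 𝕜] [NormedAddCommGroup E] [InnerProductSpace 𝕜 E]
  [FiniteDimensional 𝕜 E] {m : ℕ}

theorem abs_sub_le_norm_sub_of_nonzero_eigenvalues {T S : E →L[𝕜] E}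
    (hS : (S : E →ₗ[𝕜] E).IsSymmetric) {μT μS : Fin m → ℝ} (hμS : StrictAnti μS)
    (hT_eig : ∀ k, ∃ x, x ≠ 0 ∧ T x = (μT k : 𝕜) • x)
    (hS_eig : ∀ c : 𝕜, c ≠ 0 → (∃ x, x ≠ 0 ∧ S x = c • x) → ∃ k, c = μS k)
    (hμT_pos : ∀ k, ‖S - T‖ < μT k) (hμT_gap : ∀ k l, k < l → μT l + 2 * ‖S - T‖ < μT k)
    (k : Fin m) : |μT k - μS k| ≤ ‖S - T‖ := by
  refine abs_sub_le_of_forall_exists_abs_sub_le hμS hμT_gap (fun j => ?_) k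
  obtain ⟨x, hx₀, hx⟩ := hT_eig j
  obtain ⟨i, hi⟩ := exists_eigenvalue_norm_sub_le hS hx₀ hx
  set c := hS.eigenvalues rfl i
  have hc : c ≠ 0 := by
    rintro hc
    rw [hc, RCLike.ofReal_zero, sub_zero, RCLike.norm_ofReal, abs_of_pos] at hi
    · linarith [hμT_pos j]
    · linarith [hμT_pos j, norm_nonneg (S - T)]
  obtain ⟨l, hl⟩ := hS_eig c (RCLike.ofReal_ne_zero.2 hc)
    ⟨_, (hS.eigenvectorBasis rfl).orthonormal.ne_zero i, hS.apply_eigenvectorBasis rfl i⟩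
  refine ⟨l, ?_⟩
  rwa [RCLike.ofReal_inj.1 hl, ← RCLike.ofReal_sub, RCLike.norm_ofReal] at hi

theorem continuous_nonzero_eigenvalue {X : Type*} [TopologicalSpace X] {A : X → E →L[𝕜] E}
    (hA : Continuous A) (hA_symm : ∀ t, (A t : E →ₗ[𝕜] E).IsSymmetric) {μ : X → Fin m → ℝ}
    (hμ_pos : ∀ t k, 0 < μ t k) (hμ_anti : ∀ t, StrictAnti (μ t))
    (hμ : ∀ t, ∀ c : 𝕜, c ≠ 0 → ((∃ x, x ≠ 0 ∧ A t x = c • x) ↔ ∃ k, c = μ t k))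
    (k : Fin m) : Continuous fun t => μ t k := by
  refine continuous_iff_continuousAt.2 fun t₀ => ?_
  have hε : Tendsto (fun t => ‖A t - A t₀‖) (𝓝 t₀) (𝓝 0) :=
    tendsto_iff_norm_sub_tendsto_zero.1 (hA.tendsto t₀)
  have hpos : ∀ᶠ t in 𝓝 t₀, ∀ j, ‖A t - A t₀‖ < μ t₀ j :=
    eventually_all.2 fun j => hε.eventually (gt_mem_nhds (hμ_pos t₀ j))
  have hgap : ∀ᶠ t in 𝓝 t₀, ∀ j l, j < l → μ t₀ l + 2 * ‖A t - A t₀‖ < μ t₀ j := by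
    refine eventually_all.2 fun j => eventually_all.2 fun l => ?_
    refine eventually_imp_distrib_left.2 fun hjl => ?_
    filter_upwards [hε.eventually (gt_mem_nhds (half_pos (sub_pos.2 (hμ_anti t₀ hjl))))]
      with t ht
    linarith
  have hle : ∀ᶠ t in 𝓝 t₀, dist (μ t k) (μ t₀ k) ≤ ‖A t - A t₀‖ := by
    filter_upwards [hpos, hgap] with t hpos hgap
    rw [Real.dist_eq, abs_sub_comm]
    exact abs_sub_le_norm_sub_of_nonzero_eigenvalues (hA_symm t) (hμ_anti t)
      (fun j => (hμ t₀ _ (RCLike.ofReal_ne_zero.2 (hμ_pos t₀ j).ne')).2 ⟨j, rfl⟩)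
      (fun c hc => (hμ t c hc).1) hpos hgap k
  exact tendsto_iff_dist_tendsto_zero.2
    (squeeze_zero' (Eventually.of_forall fun _ => dist_nonneg) hle hε)

end EigenvalueContinuity

theorem ContinuousLinearMap.list_prod_map_apply_eq_smul {ι 𝕜 E : Type*} [NormedField 𝕜]
    [NormedAddCommGroup E] [NormedSpace 𝕜 E] {l : List ι} {f : ι → E →L[𝕜] E} {g : ι → 𝕜}
    {x : E} (h : ∀ i ∈ l, f i x = g i • x) : (l.map f).prod x = (l.map g).prod • x := by
  induction l with
  | nil => simp
  | cons i l ih =>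
    simp only [List.map_cons, List.prod_cons, mul_apply_eq_comp, List.forall_mem_cons] at h ⊢
    rw [ih h.2, map_smul, h.1, smul_smul, mul_comm]

section LagrangeProjection

variable {𝕜 E : Type*} [NontriviallyNormedField 𝕜] [NormedAddCommGroup E] [NormedSpace 𝕜 E]
  {m : ℕ}

/-- The Lagrange basis polynomial `∏ j, (X - ν j) / (z - ν j)` evaluated at `T`. -/
def lagrangeProj (T : E →L[𝕜] E) (ν : Fin m → 𝕜) (z : 𝕜) : E →L[𝕜] E :=
  ((List.finRange m).map fun j => (z - ν j)⁻¹ • (T - ν j • 1)).prod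

variable {T : E →L[𝕜] E} {ν : Fin m → 𝕜} {z c : 𝕜} {x : E}

theorem lagrangeProj_apply_of_apply_eq_smul (hx : T x = c • x) :
    lagrangeProj T ν z x = (∏ j, (z - ν j)⁻¹ * (c - ν j)) • x := by
  rw [lagrangeProj, Fin.prod_univ_def]
  refine list_prod_map_apply_eq_smul fun j _ => ?_
  rw [smul_apply, sub_apply, smul_apply, one_apply_eq_self, hx, ← sub_smul, smul_smul]

theorem lagrangeProj_apply_of_apply_eq_self_smul (hν : ∀ j, ν j ≠ z) (hx : T x = z • x) :
    lagrangeProj T ν z x = x := by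
  rw [lagrangeProj_apply_of_apply_eq_smul hx, Finset.prod_eq_one, one_smul]
  exact fun j _ => inv_mul_cancel₀ (sub_ne_zero.2 (hν j).symm)

theorem lagrangeProj_apply_of_apply_eq_node_smul {j : Fin m} (hx : T x = ν j • x) :
    lagrangeProj T ν z x = 0 := by
  rw [lagrangeProj_apply_of_apply_eq_smul hx, Finset.prod_eq_zero (Finset.mem_univ j) (by
    rw [sub_self, mul_zero]), zero_smul]

theorem Continuous.lagrangeProj {X : Type*} [TopologicalSpace X] {T : X → E →L[𝕜] E}
    {ν : X → Fin m → 𝕜} {z : X → 𝕜} (hT : Continuous T) (hν : ∀ j, Continuous fun t => ν t j)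
    (hz : Continuous z) (hνz : ∀ t j, ν t j ≠ z t) :
    Continuous fun t => lagrangeProj (T t) (ν t) (z t) :=
  continuous_list_prod _ fun j _ =>
    ((hz.sub (hν j)).inv₀ fun t => sub_ne_zero.2 (hνz t j).symm).smul
      (hT.sub ((hν j).smul continuous_const))

end LagrangeProjection

section SpectralProjection

variable {𝕜 E : Type*} [RCLike 𝕜] [NormedAddCommGroup E] [InnerProductSpace 𝕜 E]
  [FiniteDimensional 𝕜 E] {m : ℕ} {T : E →L[𝕜] E} {ν : Fin m → 𝕜} {z : 𝕜}

theorem comp_lagrangeProj_of_isSymmetric (hT : (T : E →ₗ[𝕜] E).IsSymmetric)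
    (hspec : ∀ c x, x ≠ 0 → T x = c • x → c = z ∨ ∃ j, c = ν j) :
    T ∘L lagrangeProj T ν z = z • lagrangeProj T ν z := by
  let b := hT.eigenvectorBasis rfl
  refine coe_injective (b.toBasis.ext fun i => ?_)
  have hb : T (b i) = (hT.eigenvalues rfl i : 𝕜) • b i := hT.apply_eigenvectorBasis rfl i
  simp only [OrthonormalBasis.coe_toBasis, coe_coe, comp_apply, smul_apply]
  rcases hspec _ _ (b.orthonormal.ne_zero i) hb with hz | ⟨j, hj⟩
  · rw [lagrangeProj_apply_of_apply_eq_smul hb, map_smul, hb, hz, smul_comm]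
  · rw [lagrangeProj_apply_of_apply_eq_node_smul (hj ▸ hb), map_zero, smul_zero]

theorem isIdempotentElem_lagrangeProj (hT : (T : E →ₗ[𝕜] E).IsSymmetric)
    (hspec : ∀ c x, x ≠ 0 → T x = c • x → c = z ∨ ∃ j, c = ν j) (hν : ∀ j, ν j ≠ z) :
    IsIdempotentElem (lagrangeProj T ν z) :=
  ext fun x => lagrangeProj_apply_of_apply_eq_self_smul hν
    (DFunLike.congr_fun (comp_lagrangeProj_of_isSymmetric hT hspec) x)

end SpectralProjection

section FixedSection

variable {𝕜 E : Type*} [NontriviallyNormedField 𝕜] [NormedAddCommGroup E] [NormedSpace 𝕜 E]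

theorem ContinuousLinearMap.apply_ne_zero_of_norm_sub_lt_one {P Q : E →L[𝕜] E}
    (hPQ : ‖Q - P‖ < 1) {x : E} (hx₀ : x ≠ 0) (hx : P x = x) : Q x ≠ 0 := by
  intro hQx
  have : ‖x‖ < ‖x‖ :=
    calc ‖x‖ = ‖(Q - P) x‖ := by rw [sub_apply, hQx, hx, zero_sub, norm_neg]
      _ ≤ ‖Q - P‖ * ‖x‖ := (Q - P).le_opNorm x
      _ < 1 * ‖x‖ := by gcongr
      _ = ‖x‖ := one_mul _
  exact this.false

theorem exists_fixed_section_extend {Q : ℝ → E →L[𝕜] E} (hQ : Continuous Q)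
    (hidem : ∀ t, IsIdempotentElem (Q t)) {s a b : ℝ} (hsa : s ≤ a) {v : ℝ → E}
    (hv : Continuous v) (hv_fix : ∀ t ∈ Icc s a, v t ≠ 0 ∧ Q t (v t) = v t)
    (hQ_near : ∀ t ∈ Ioc a b, ‖Q t - Q a‖ < 1) :
    ∃ w : ℝ → E, Continuous w ∧ ∀ t ∈ Icc s b, w t ≠ 0 ∧ Q t (w t) = w t := by
  obtain ⟨hva₀, hva⟩ := hv_fix a ⟨hsa, le_rfl⟩
  refine ⟨fun t => if t ≤ a then v t else Q t (v a),
    hv.if_le (hQ.clm_apply continuous_const) continuous_id continuous_const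
      fun t ht => by rw [ht, hva], fun t ht => ?_⟩
  by_cases hta : t ≤ a
  · simpa only [if_pos hta] using hv_fix t ⟨ht.1, hta⟩
  · simp only [if_neg hta]
    exact ⟨apply_ne_zero_of_norm_sub_lt_one (hQ_near t ⟨not_le.1 hta, ht.2⟩) hva₀ hva,
      DFunLike.congr_fun (hidem t) (v a)⟩

theorem exists_continuous_fixed_section {Q : ℝ → E →L[𝕜] E} (hQ : UniformContinuous Q)
    (hidem : ∀ t, IsIdempotentElem (Q t)) {s : ℝ} {x₀ : E} (hx₀ : x₀ ≠ 0) (hQx₀ : Q s x₀ = x₀)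
    (b : ℝ) : ∃ v : ℝ → E, Continuous v ∧ ∀ t ∈ Icc s b, v t ≠ 0 ∧ Q t (v t) = v t := by
  obtain ⟨δ, hδ, hQδ⟩ := Metric.uniformContinuous_iff.1 hQ 1 one_pos
  have hsteps : ∀ i : ℕ, ∃ v : ℝ → E, Continuous v ∧
      ∀ t ∈ Icc s (s + i * (δ / 2)), v t ≠ 0 ∧ Q t (v t) = v t := by
    intro i
    induction i with
    | zero =>
      refine ⟨fun _ => x₀, continuous_const, fun t ht => ?_⟩
      obtain rfl : t = s := by simpa using ht
      exact ⟨hx₀, hQx₀⟩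
    | succ i ih =>
      obtain ⟨v, hv, hv_fix⟩ := ih
      refine exists_fixed_section_extend hQ.continuous hidem
        (le_add_of_nonneg_right (by positivity)) hv hv_fix fun t ht => ?_
      rw [← dist_eq_norm]
      refine hQδ ?_
      rw [Real.dist_eq, abs_of_pos (sub_pos.2 ht.1)]
      have := ht.2
      push_cast at this
      linarith
  obtain ⟨i, hi⟩ := exists_nat_ge ((b - s) / (δ / 2))
  obtain ⟨v, hv, hv_fix⟩ := hsteps i
  refine ⟨v, hv, fun t ht => hv_fix t ⟨ht.1, ht.2.trans ?_⟩⟩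
  rw [div_le_iff₀ (by positivity)] at hi
  linarith

theorem exists_continuous_fixed_section_Icc {a b : ℝ} (hab : a ≤ b) {Q : Icc a b → E →L[𝕜] E}
    (hQ : Continuous Q) (hidem : ∀ t, IsIdempotentElem (Q t)) {x₀ : E} (hx₀ : x₀ ≠ 0)
    (hQx₀ : Q ⟨a, left_mem_Icc.2 hab⟩ x₀ = x₀) :
    ∃ v : Icc a b → E, Continuous v ∧ ∀ t, v t ≠ 0 ∧ Q t (v t) = v t := by
  have hQ' : UniformContinuous (IccExtend hab Q) :=
    (CompactSpace.uniformContinuous_of_continuous hQ).comp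
      (LipschitzWith.projIcc hab).uniformContinuous
  obtain ⟨v, hv, hv_fix⟩ :=
    exists_continuous_fixed_section hQ' (fun _ => hidem _) hx₀ (by rwa [IccExtend_left]) b
  exact ⟨fun t => v t, hv.comp continuous_subtype_val,
    fun t => by simpa only [IccExtend_val] using hv_fix t t.2⟩

end FixedSection

section EigenvectorSelection

variable {𝕜 E : Type*} [RCLike 𝕜] [NormedAddCommGroup E] [InnerProductSpace 𝕜 E]
  [FiniteDimensional 𝕜 E] {m : ℕ}

theorem exists_continuous_unit_eigenvector {a b : ℝ} (hab : a ≤ b) {A : Icc a b → E →L[𝕜] E}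
    (hA : Continuous A) (hA_symm : ∀ t, (A t : E →ₗ[𝕜] E).IsSymmetric)
    {μ : Icc a b → Fin m → ℝ} (hμ_pos : ∀ t k, 0 < μ t k) (hμ_anti : ∀ t, StrictAnti (μ t))
    (hμ : ∀ t, ∀ c : 𝕜, c ≠ 0 → ((∃ x, x ≠ 0 ∧ A t x = c • x) ↔ ∃ k, c = μ t k))
    (k : Fin m) :
    ∃ v : Icc a b → E, Continuous v ∧ ∀ t, ‖v t‖ = 1 ∧ A t (v t) = (μ t k : 𝕜) • v t := by
  -- `Q t` projects onto the `μ t k`-eigenspace: it kills `0` and the other `μ t j`.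
  let ν t : Fin m → 𝕜 := Function.update (fun j => (μ t j : 𝕜)) k 0
  let Q t := lagrangeProj (A t) (ν t) (μ t k)
  have hμ_cont : ∀ j, Continuous fun t => (μ t j : 𝕜) := fun j =>
    RCLike.continuous_ofReal.comp (continuous_nonzero_eigenvalue hA hA_symm hμ_pos hμ_anti hμ j)
  have hν_cont : ∀ j, Continuous fun t => ν t j := fun j => by
    by_cases hjk : j = k
    · simpa [ν, hjk] using continuous_const
    · simpa [ν, hjk] using hμ_cont j
  have hν : ∀ t j, ν t j ≠ μ t k := fun t j => by
    by_cases hjk : j = k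
    · simpa [ν, hjk] using (RCLike.ofReal_ne_zero.2 (hμ_pos t k).ne').symm
    · simpa [ν, hjk] using (hμ_anti t).injective.ne hjk
  have hspec : ∀ t (c : 𝕜) x, x ≠ 0 → A t x = c • x → c = μ t k ∨ ∃ j, c = ν t j := by
    intro t c x hx₀ hx
    by_cases hc : c = 0
    · exact Or.inr ⟨k, by simp [ν, hc]⟩
    obtain ⟨j, rfl⟩ := (hμ t c hc).1 ⟨x, hx₀, hx⟩
    by_cases hjk : j = k
    · exact Or.inl (by rw [hjk])
    · exact Or.inr ⟨j, by simp [ν, hjk]⟩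
  have hQ : Continuous Q := hA.lagrangeProj hν_cont (hμ_cont k) hν
  have hAQ : ∀ t x, A t (Q t x) = (μ t k : 𝕜) • Q t x := fun t =>
    DFunLike.congr_fun (comp_lagrangeProj_of_isSymmetric (hA_symm t) (hspec t))
  let a' : Icc a b := ⟨a, left_mem_Icc.2 hab⟩
  obtain ⟨x₀, hx₀, hAx₀⟩ := (hμ a' _ (RCLike.ofReal_ne_zero.2 (hμ_pos a' k).ne')).2 ⟨k, rfl⟩
  obtain ⟨v, hv, hv_fix⟩ := exists_continuous_fixed_section_Icc hab hQ
    (fun t => isIdempotentElem_lagrangeProj (hA_symm t) (hspec t) (hν t)) hx₀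
    (lagrangeProj_apply_of_apply_eq_self_smul (hν a') hAx₀)
  have hAv : ∀ t, A t (v t) = (μ t k : 𝕜) • v t := fun t => by
    rw [← (hv_fix t).2, hAQ]
  refine ⟨fun t => (‖v t‖ : 𝕜)⁻¹ • v t,
    ((RCLike.continuous_ofReal.comp hv.norm).inv₀
      fun t => RCLike.ofReal_ne_zero.2 (norm_ne_zero_iff.2 (hv_fix t).1)).smul hv,
    fun t => ⟨norm_smul_inv_norm (hv_fix t).1, by rw [map_smul, hAv, smul_comm]⟩⟩

end EigenvectorSelection

theorem continuous_eigenvector_selection_general {n m : ℕ}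
    (A : Set.Icc (0 : ℝ) 1 → (Cn n →L[ℂ] Cn n))
    (hA : Continuous A) (hpos : ∀ t, (A t).IsPositive)
    (mu : Set.Icc (0 : ℝ) 1 → Fin m → ℝ)
    (hmupos : ∀ t k, 0 < mu t k)
    (hmudec : ∀ t, ∀ k l : Fin m, k < l → mu t l < mu t k)
    (heig : ∀ t, ∀ c : ℂ, c ≠ 0 →
      ((∃ x : Cn n, x ≠ 0 ∧ A t x = c • x) ↔ ∃ k, c = (mu t k : ℂ))) :
    ∃ v : Fin m → Set.Icc (0 : ℝ) 1 → Cn n,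
      (∀ k, Continuous (v k)) ∧
      ∀ t, Orthonormal ℂ (fun k => v k t) ∧
        ∀ k, A t (v k t) = (mu t k : ℂ) • v k t := by
  have hA_symm : ∀ t, (A t : Cn n →ₗ[ℂ] Cn n).IsSymmetric := fun t => (hpos t).isSymmetric
  have hmu_anti : ∀ t, StrictAnti (mu t) := fun t _ _ h => hmudec t _ _ h
  choose v hv_cont hv using
    exists_continuous_unit_eigenvector zero_le_one hA hA_symm hmupos hmu_anti heig
  refine ⟨v, hv_cont, fun t => ⟨⟨fun k => (hv k t).1, fun k l hkl => ?_⟩, fun k => (hv k t).2⟩⟩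
  exact (hA_symm t).orthogonalFamily_eigenspaces
    (by exact_mod_cast (hmu_anti t).injective.ne hkl)
    ⟨_, Module.End.mem_eigenspace_iff.2 (hv k t).2⟩ ⟨_, Module.End.mem_eigenspace_iff.2 (hv l t).2⟩

/-- **Continuous selection of eigenvectors.** Let `t ↦ A_t` be a norm-continuous family of
Hermitian positive-semidefinite operators on `ℂⁿ` such that for each `t` the nonzero
eigenvalues of `A_t` are exactly the pairwise distinct values `μ₁(t) > ⋯ > μ_m(t) > 0`
(each simple, i.e. the rank of `A_t` is `m`). Then there is a continuous choice of
orthonormal eigenvectors `v₁(t), …, v_m(t)` with `A_t v_k(t) = μ_k(t) v_k(t)`. -/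
theorem continuous_eigenvector_selection {n m : ℕ}
    (A : Set.Icc (0 : ℝ) 1 → (Cn n →L[ℂ] Cn n))
    (hA : Continuous A) (hpos : ∀ t, (A t).IsPositive)
    (mu : Set.Icc (0 : ℝ) 1 → Fin m → ℝ)
    (hmupos : ∀ t k, 0 < mu t k)
    (hmudec : ∀ t, ∀ k l : Fin m, k < l → mu t l < mu t k)
    (heig : ∀ t, ∀ c : ℂ, c ≠ 0 →
      ((∃ x : Cn n, x ≠ 0 ∧ A t x = c • x) ↔ ∃ k, c = (mu t k : ℂ)))
    (hrank : ∀ t, Module.finrank ℂ (LinearMap.range (A t : Cn n →ₗ[ℂ] Cn n)) = m) :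
    ∃ v : Fin m → Set.Icc (0 : ℝ) 1 → Cn n,
      (∀ k, Continuous (v k)) ∧
      ∀ t, Orthonormal ℂ (fun k => v k t) ∧
        ∀ k, A t (v k t) = (mu t k : ℂ) • v k t :=
  continuous_eigenvector_selection_general A hA hpos mu hmupos hmudec heig
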